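/- Let g ≥ 1 be an integer and let Z be a symmetric g×g complex matrix whose imaginary part is positive definite. Then the function ω ↦ θ(ω, Z) = ∑_{n ∈ ℤ^g} exp(π i nᵀ Z n + 2π i nᵀ ω) is complex differentiable (holomorphic) at every point ω ∈ ℂ^g. -/

import Mathlib

/-!
Write `θ(·, Z) = ∑ₙ tₙ` with `tₙ(w) = exp(πi nᵀZn + 2πi nᵀw)`. Positive definiteness of
`Y = Im Z` gives `nᵀYn ≥ c ∑ nᵢ²` for some `c > 0`, so on the unit ball around `ω`, where
`|Im wᵢ| ≤ S := ‖ω‖ + 1`, both `|tₙ|` and the norm of the derivative `tₙ(w) · 2πi ⟨n, ·⟩` are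
bounded by `exp(-π (c ∑ nᵢ² - 2(S + 1) ∑ |nᵢ|))`. This bound is a product of one-variable Jacobi
theta bounds, hence summable over `ℤ^g`, and the series can be differentiated term by term.
-/

open scoped BigOperators

/-- The Riemann theta function `θ(ω, Z) = ∑_{n ∈ ℤ^g} exp(π i nᵀ Z n + 2π i nᵀ ω)`. -/
noncomputable def riemannTheta {g : ℕ} (ω : Fin g → ℂ) (Z : Matrix (Fin g) (Fin g) ℂ) : ℂ :=
  ∑' n : Fin g → ℤ,
    Complex.exp (Real.pi * Complex.I *
        dotProduct (fun i => (n i : ℂ)) (Z.mulVec fun i => (n i : ℂ)) +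
      2 * Real.pi * Complex.I * dotProduct (fun i => (n i : ℂ)) ω)

open Real Matrix Complex

theorem exists_pos_mul_norm_sq_le {E : Type*} [NormedAddCommGroup E] [NormedSpace ℝ E]
    [FiniteDimensional ℝ E] {Q : E → ℝ} (hQ : Continuous Q)
    (hsmul : ∀ (t : ℝ) x, Q (t • x) = t ^ 2 * Q x) (hpos : ∀ x ≠ 0, 0 < Q x) :
    ∃ c > 0, ∀ x, c * ‖x‖ ^ 2 ≤ Q x := by
  have hQ0 : Q 0 = 0 := by simpa using hsmul 0 0
  rcases subsingleton_or_nontrivial E with _ | _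
  · exact ⟨1, one_pos, fun x => by simp [Subsingleton.elim x 0, hQ0]⟩
  obtain ⟨x₀, hx₀, hmin⟩ := (isCompact_sphere (0 : E) 1).exists_isMinOn
    (NormedSpace.sphere_nonempty.2 zero_le_one) hQ.continuousOn
  refine ⟨Q x₀, hpos x₀ (ne_zero_of_mem_unit_sphere ⟨x₀, hx₀⟩), fun x => ?_⟩
  rcases eq_or_ne x 0 with rfl | hx
  · simp [hQ0]
  have hnx : ‖x‖ ≠ 0 := norm_ne_zero_iff.2 hx
  have hunit : ‖x‖⁻¹ • x ∈ Metric.sphere (0 : E) 1 := by simp [norm_smul, hnx]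
  have hle : Q x₀ ≤ (‖x‖ ^ 2)⁻¹ * Q x := by simpa [hsmul, inv_pow] using hmin hunit
  rwa [le_inv_mul_iff₀ (by positivity), mul_comm] at hle

theorem Matrix.PosDef.exists_pos_mul_sum_sq_le {ι : Type*} [Fintype ι]
    {Y : Matrix ι ι ℝ} (hY : Y.PosDef) :
    ∃ c > 0, ∀ x : ι → ℝ, c * ∑ i, x i ^ 2 ≤ x ⬝ᵥ Y *ᵥ x := by
  obtain ⟨c, hc, hle⟩ := exists_pos_mul_norm_sq_le
    (Q := fun x : EuclideanSpace ℝ ι => x.ofLp ⬝ᵥ Y *ᵥ x.ofLp)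
    (by fun_prop) (fun t x => by simp [mulVec_smul]; ring)
    (fun x hx => by simpa using hY.dotProduct_mulVec_pos (x := x.ofLp) (by simpa using hx))
  refine ⟨c, hc, fun x => ?_⟩
  simpa [EuclideanSpace.real_norm_sq_eq] using hle (WithLp.toLp 2 x)

theorem Summable.fin_prod_of_nonneg {α : Type*} {φ : α → ℝ} (hφ : Summable φ) (hφ0 : 0 ≤ φ) :
    ∀ g : ℕ, Summable fun n : Fin g → α => ∏ i, φ (n i)
  | 0 => .of_finite
  | g + 1 => by
    rw [← (Fin.consEquiv fun _ => α).summable_iff]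
    simpa [Fin.consEquiv, Fin.prod_univ_succ, Function.comp_def] using
      hφ.mul_of_nonneg (hφ.fin_prod_of_nonneg hφ0 g) hφ0
        fun n => Finset.prod_nonneg fun i _ => hφ0 _

theorem summable_exp_neg_pi_mul_sum_sq {c : ℝ} (hc : 0 < c) (S : ℝ) (g : ℕ) :
    Summable fun n : Fin g → ℤ =>
      rexp (-π * (c * ∑ i, (n i : ℝ) ^ 2 - 2 * S * ∑ i, |(n i : ℝ)|)) := by
  have hφ := summable_pow_mul_jacobiTheta₂_term_bound S hc 0
  simp only [pow_zero, one_mul, Int.cast_abs] at hφ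
  refine (hφ.fin_prod_of_nonneg (fun m => (exp_pos _).le) g).congr fun n => ?_
  rw [← Real.exp_sum, Finset.mul_sum, Finset.mul_sum, ← Finset.sum_sub_distrib, Finset.mul_sum]

section ThetaTerm

variable {ι : Type*} [Fintype ι]

noncomputable def dotProductCLM (v : ι → ℂ) : (ι → ℂ) →L[ℂ] ℂ :=
  LinearMap.toContinuousLinearMap (dotProductBilin ℂ ℂ v)

theorem norm_dotProductCLM_le (v : ι → ℂ) : ‖dotProductCLM v‖ ≤ ∑ i, ‖v i‖ := by
  refine ContinuousLinearMap.opNorm_le_bound _ (by positivity) fun w => ?_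
  simp only [dotProductCLM, LinearMap.coe_toContinuousLinearMap', dotProductBilin_apply_apply,
    dotProduct, Finset.sum_mul]
  refine (norm_sum_le _ _).trans (Finset.sum_le_sum fun i _ => ?_)
  rw [norm_mul]
  exact mul_le_mul_of_nonneg_left (norm_le_pi_norm w i) (norm_nonneg _)

noncomputable def thetaTerm (Z : Matrix ι ι ℂ) (n : ι → ℤ) (w : ι → ℂ) : ℂ :=
  cexp (π * I * ((fun i => (n i : ℂ)) ⬝ᵥ Z *ᵥ fun i => (n i : ℂ)) +
    2 * π * I * ((fun i => (n i : ℂ)) ⬝ᵥ w))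

theorem norm_thetaTerm (Z : Matrix ι ι ℂ) (n : ι → ℤ) (w : ι → ℂ) :
    ‖thetaTerm Z n w‖ = rexp (-π * ((fun i => (n i : ℝ)) ⬝ᵥ Z.map im *ᵥ fun i => (n i : ℝ))
      - 2 * π * ∑ i, (n i : ℝ) * (w i).im) := by
  rw [thetaTerm, norm_exp]
  congr 1
  simp only [dotProduct, mulVec, map_apply, add_re, mul_re, mul_im, I_re, I_im, ofReal_re,
    ofReal_im, re_ofNat, im_ofNat, im_sum, intCast_re, intCast_im, mul_zero, zero_mul, add_zero,
    zero_add, sub_zero, mul_one]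
  ring

theorem norm_thetaTerm_le {Z : Matrix ι ι ℂ} {c S : ℝ}
    (hZ : ∀ x : ι → ℝ, c * ∑ i, x i ^ 2 ≤ x ⬝ᵥ Z.map im *ᵥ x) {w : ι → ℂ}
    (hw : ∀ i, |(w i).im| ≤ S) (n : ι → ℤ) :
    ‖thetaTerm Z n w‖ ≤ rexp (-π * (c * ∑ i, (n i : ℝ) ^ 2 - 2 * S * ∑ i, |(n i : ℝ)|)) := by
  have hquad := mul_le_mul_of_nonneg_left (hZ fun i => (n i : ℝ)) pi_pos.le
  have hlin : -∑ i, (n i : ℝ) * (w i).im ≤ S * ∑ i, |(n i : ℝ)| := by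
    rw [← Finset.sum_neg_distrib, Finset.mul_sum]
    refine Finset.sum_le_sum fun i _ => (neg_le_abs _).trans ?_
    rw [abs_mul, mul_comm]
    exact mul_le_mul_of_nonneg_right (hw i) (abs_nonneg _)
  have hlin' := mul_le_mul_of_nonneg_left hlin two_pi_pos.le
  rw [norm_thetaTerm, exp_le_exp]
  linarith

theorem hasFDerivAt_thetaTerm (Z : Matrix ι ι ℂ) (n : ι → ℤ) (w : ι → ℂ) :
    HasFDerivAt (thetaTerm Z n)
      (thetaTerm Z n w • (2 * π * I : ℂ) • dotProductCLM fun i => (n i : ℂ)) w :=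
  ((((dotProductCLM fun i => (n i : ℂ)).hasFDerivAt (x := w)).const_mul
    (2 * π * I : ℂ)).const_add _).cexp

theorem norm_fderiv_thetaTerm_le {Z : Matrix ι ι ℂ} {c S : ℝ}
    (hZ : ∀ x : ι → ℝ, c * ∑ i, x i ^ 2 ≤ x ⬝ᵥ Z.map im *ᵥ x) {w : ι → ℂ}
    (hw : ∀ i, |(w i).im| ≤ S) (n : ι → ℤ) :
    ‖thetaTerm Z n w • (2 * π * I : ℂ) • dotProductCLM fun i => (n i : ℂ)‖ ≤
      rexp (-π * (c * ∑ i, (n i : ℝ) ^ 2 - 2 * (S + 1) * ∑ i, |(n i : ℝ)|)) := by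
  have hnorm : ‖(2 * π * I : ℂ)‖ = 2 * π := by simp [pi_pos.le]
  calc _ ≤ rexp (-π * (c * ∑ i, (n i : ℝ) ^ 2 - 2 * S * ∑ i, |(n i : ℝ)|)) *
          (2 * π * ∑ i, |(n i : ℝ)|) := by
        rw [norm_smul, norm_smul, hnorm]
        gcongr
        · exact norm_thetaTerm_le hZ hw n
        · simpa only [norm_intCast] using norm_dotProductCLM_le fun i => (n i : ℂ)
    -- `x ≤ exp x` absorbs the factor `2π ∑ |nᵢ|` into the exponential.
    _ ≤ rexp (-π * (c * ∑ i, (n i : ℝ) ^ 2 - 2 * S * ∑ i, |(n i : ℝ)|)) *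
          rexp (2 * π * ∑ i, |(n i : ℝ)|) := by
        gcongr
        linarith [add_one_le_exp (2 * π * ∑ i, |(n i : ℝ)|)]
    _ = _ := by rw [← Real.exp_add]; ring_nf

end ThetaTerm

theorem riemann_theta_differentiable_general (g : ℕ)
    (Z : Matrix (Fin g) (Fin g) ℂ)
    (hZpos : (Z.map Complex.im).PosDef) :
    ∀ ω : Fin g → ℂ, DifferentiableAt ℂ (fun w : Fin g → ℂ => riemannTheta w Z) ω := by
  intro ω
  show DifferentiableAt ℂ (fun w => ∑' n, thetaTerm Z n w) ω
  obtain ⟨c, hc, hZ⟩ := hZpos.exists_pos_mul_sum_sq_le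
  have him : ∀ w ∈ Metric.ball ω 1, ∀ i, |(w i).im| ≤ ‖ω‖ + 1 := fun w hw i =>
    calc |(w i).im| ≤ ‖w‖ := (abs_im_le_norm _).trans (norm_le_pi_norm w i)
      _ ≤ ‖ω‖ + 1 := by linarith [norm_le_norm_add_norm_sub' w ω, (mem_ball_iff_norm.1 hw).le]
  have hω : ω ∈ Metric.ball ω 1 := Metric.mem_ball_self one_pos
  have hsum : Summable (thetaTerm Z · ω) :=
    .of_norm_bounded (summable_exp_neg_pi_mul_sum_sq hc _ g) (norm_thetaTerm_le hZ (him ω hω))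
  exact (hasFDerivAt_tsum_of_isPreconnected (summable_exp_neg_pi_mul_sum_sq hc _ g)
    Metric.isOpen_ball (convex_ball ω 1).isPreconnected
    (fun n w _ => hasFDerivAt_thetaTerm Z n w)
    (fun n w hw => norm_fderiv_thetaTerm_le hZ (him w hw) n) hω hsum hω).differentiableAt

/-- for `Z` in the Siegel upper half-space of genus `g ≥ 1`, the function
`ω ↦ θ(ω, Z)` is complex differentiable (holomorphic) at every point `ω ∈ ℂ^g`. -/
theorem riemann_theta_differentiable (g : ℕ) (hg : 1 ≤ g)
    (Z : Matrix (Fin g) (Fin g) ℂ) (hZsym : Z.IsSymm)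
    (hZpos : (Z.map Complex.im).PosDef) :
    ∀ ω : Fin g → ℂ, DifferentiableAt ℂ (fun w : Fin g → ℂ => riemannTheta w Z) ω :=
  riemann_theta_differentiable_general g Z hZpos
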